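/- arXiv:2506.21501 — 3 statements merged into one kernel-verified Lean document; each statement's English description precedes it below -/
import Mathlib

section
/- Let Z and A be binary and suppose g* and f* are Z-compatible target treatment distributions, i.e. both lie pointwise between g_0(W) = P(A=1|Z=0,W) and g_1(W) = P(A=1|Z=1,W). Define Wald(W) = (E[Y|Z=1,W] − E[Y|Z=0,W]) / (g_1(W) − g_0(W)) on the event g_0(W) ≠ g_1(W), with the convention (g*(W) − f*(W))·Wald(W) = 0 where g_0(W) = g_1(W). Then E[Y^{g*} − Y^{f*}] = E[ (g*(W) − f*(W)) · Wald(W) ], where E[Y^{g*}] := E_W[ (E[Y|Z=0,W](g_1(W) − g*(W)) + E[Y|Z=1,W](g*(W) − g_0(W))) / (g_1(W) − g_0(W)) ]. -/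
open MeasureTheory

/-- Theorem generaldiff: for binary Z and A and Z-compatible targets
g*, f*, the identified contrast satisfies
E[Y^{g*} − Y^{f*}] = E[(g*(W) − f*(W))·Wald(W)], where
E[Y^{g*}] = E_W[(E[Y|Z=0,W](g₁−g*) + E[Y|Z=1,W](g*−g₀))/(g₁−g₀)]
and Wald(W) = (E[Y|Z=1,W] − E[Y|Z=0,W])/(g₁(W) − g₀(W)), with the convention that
the contributions vanish on the event g₀(W) = g₁(W) (forced by Z-compatibility). -/
theorem stmt10 {𝓦 : Type*} [MeasurableSpace 𝓦]
    (P : Measure 𝓦) [IsProbabilityMeasure P]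
    (Y0 Y1 g0 g1 gstar fstar : 𝓦 → ℝ)
    (hgcompat : ∀ w, min (g0 w) (g1 w) ≤ gstar w ∧ gstar w ≤ max (g0 w) (g1 w))
    (hfcompat : ∀ w, min (g0 w) (g1 w) ≤ fstar w ∧ fstar w ≤ max (g0 w) (g1 w))
    (hint1 : Integrable (fun w =>
      (Y0 w * (g1 w - gstar w) + Y1 w * (gstar w - g0 w)) / (g1 w - g0 w)) P)
    (hint2 : Integrable (fun w =>
      (Y0 w * (g1 w - fstar w) + Y1 w * (fstar w - g0 w)) / (g1 w - g0 w)) P)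
    (hint3 : Integrable (fun w =>
      (gstar w - fstar w) * ((Y1 w - Y0 w) / (g1 w - g0 w))) P) :
    (∫ w, (Y0 w * (g1 w - gstar w) + Y1 w * (gstar w - g0 w)) / (g1 w - g0 w) ∂P)
      - (∫ w, (Y0 w * (g1 w - fstar w) + Y1 w * (fstar w - g0 w)) / (g1 w - g0 w) ∂P)
      = ∫ w, (gstar w - fstar w) * ((Y1 w - Y0 w) / (g1 w - g0 w)) ∂P := by
  rw [← integral_sub hint1 hint2]
  apply integral_congr_ae
  filter_upwards with w
  by_cases h : g1 w = g0 w
  · have hg := hgcompat w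
    have hf := hfcompat w
    rw [h] at hg hf
    simp only [min_self, max_self] at hg hf
    have hg' : gstar w = g0 w := le_antisymm hg.2 hg.1
    have hf' : fstar w = g0 w := le_antisymm hf.2 hf.1
    simp [h, hg', hf']
  · have h' : g1 w - g0 w ≠ 0 := sub_ne_zero.mpr h
    field_simp
    ring
end

section
/- Suppose the outcome structural equation is additively separable: f_Y(A,W,U_Y) = m(A,W) + v(W,U_Y). Then for any intervened world in which A^{h*} has conditional law g(h*)(·|W) given W (possibly dependent on U_Y), E[f_Y(A^{h*},W,U_Y)] = E_W[ ∫ m(a,W) g(h*)(da|W) + E[v(W,U_Y)|W] ]; in particular this equals E[f_Y(Ã, W, U_Y)] where Ã ~ g(h*)(·|W) is drawn independently of U_Y given W. -/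
open MeasureTheory ProbabilityTheory

lemma aux14 {Ω 𝓦 𝓐 : Type*} {mΩ : MeasurableSpace Ω}
    [MeasurableSpace 𝓦] [MeasurableSpace 𝓐]
    (P : Measure Ω) [IsFiniteMeasure P] (W : Ω → 𝓦) (A : Ω → 𝓐)
    (m : 𝓐 → 𝓦 → ℝ) (G : Kernel 𝓦 𝓐) [IsSFiniteKernel G]
    (hW : Measurable W) (hA : Measurable A)
    (hm : Measurable (Function.uncurry m))
    (hlaw : P.map (fun ω => (W ω, A ω)) = (P.map W).compProd G)
    (hint : Integrable (fun ω => m (A ω) (W ω)) P) :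
    ∫ ω, m (A ω) (W ω) ∂P = ∫ w, ∫ a, m a w ∂(G w) ∂(P.map W) := by
  have hmeas : Measurable (fun p : 𝓦 × 𝓐 => m p.2 p.1) :=
    hm.comp (measurable_snd.prodMk measurable_fst)
  have h1 : ∫ ω, m (A ω) (W ω) ∂P
      = ∫ p : 𝓦 × 𝓐, m p.2 p.1 ∂(P.map (fun ω => (W ω, A ω))) := by
    rw [integral_map (hW.prodMk hA).aemeasurable hmeas.aestronglyMeasurable]
  have hint' : Integrable (fun p : 𝓦 × 𝓐 => m p.2 p.1) ((P.map W).compProd G) := by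
    rw [← hlaw]
    exact (integrable_map_measure hmeas.aestronglyMeasurable
      (hW.prodMk hA).aemeasurable).mpr hint
  haveI : IsFiniteMeasure (P.map W) := Measure.isFiniteMeasure_map P W
  rw [h1, hlaw, Measure.integral_compProd hint']



open MeasureTheory ProbabilityTheory

/-- if the outcome equation is additively separable,
f_Y(A,W,U_Y) = m(A,W) + v(W,U_Y), and A^{h*} has conditional law G = g(h*)(·|W)
given W (possibly dependent on U_Y), then
E[f_Y(A^{h*},W,U_Y)] = E_W[∫ m(a,W) dG(a|W)] + E[v(W,U_Y)], and this equals
E[f_Y(Ã,W,U_Y)] for Ã drawn from g(h*)(·|W) (independently of U_Y) given W. -/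
theorem stmt14 {Ω 𝓦 𝓐 𝓤 : Type*} {mΩ : MeasurableSpace Ω}
    [MeasurableSpace 𝓦] [MeasurableSpace 𝓐]
    (P : Measure Ω) [IsProbabilityMeasure P]
    (W : Ω → 𝓦) (Astar Atilde : Ω → 𝓐) (UY : Ω → 𝓤)
    (m : 𝓐 → 𝓦 → ℝ) (v : 𝓦 → 𝓤 → ℝ)
    (G : Kernel 𝓦 𝓐) [IsMarkovKernel G]
    (hW : Measurable W) (hAstar : Measurable Astar) (hAtilde : Measurable Atilde)
    (hm : Measurable (Function.uncurry m))
    -- A^{h*} has conditional law G given W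
    (hlaw1 : P.map (fun ω => (W ω, Astar ω)) = (P.map W).compProd G)
    -- Ã is drawn from the same conditional law G given W
    (hlaw2 : P.map (fun ω => (W ω, Atilde ω)) = (P.map W).compProd G)
    (hint1 : Integrable (fun ω => m (Astar ω) (W ω)) P)
    (hint2 : Integrable (fun ω => v (W ω) (UY ω)) P)
    (hint3 : Integrable (fun ω => m (Atilde ω) (W ω)) P) :
    (∫ ω, (m (Astar ω) (W ω) + v (W ω) (UY ω)) ∂P
        = (∫ w, ∫ a, m a w ∂(G w) ∂(P.map W)) + ∫ ω, v (W ω) (UY ω) ∂P)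
    ∧ ∫ ω, (m (Astar ω) (W ω) + v (W ω) (UY ω)) ∂P
        = ∫ ω, (m (Atilde ω) (W ω) + v (W ω) (UY ω)) ∂P := by
  have e1 := aux14 P W Astar m G hW hAstar hm hlaw1 hint1
  have e2 := aux14 P W Atilde m G hW hAtilde hm hlaw2 hint3
  constructor
  · rw [integral_add hint1 hint2, e1]
  · rw [integral_add hint1 hint2, integral_add hint3 hint2, e1, e2]
end

section
/- If two instrument policies h̃₁ and h̃₂ satisfy B(h̃₁) = B(h̃₂), i.e., ∫ p(a|z,W) h̃₁(z|W) dz = ∫ p(a|z,W) h̃₂(z|W) dz for almost all (a,W), then the identified causal means coincide: E_W[ ∫ E[Y|Z=z,W] dH̃₁(z|W) ] = E_W[ ∫ E[Y|Z=z,W] dH̃₂(z|W) ], provided E[Y|Z,W] is a measurable function of the form E[Y|Z=z,W] = ∫ y p(y|a,z,W) p(a|z,W) da dy with p(y|a,z,W) = p(y|a,W) not depending on z (exclusion at the level of the observed conditional). -/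
open MeasureTheory

lemma inner_eq {𝓐 𝓩 : Type*} [MeasurableSpace 𝓐] [MeasurableSpace 𝓩]
    (μA : Measure 𝓐) (μZ : Measure 𝓩) [SigmaFinite μA] [SigmaFinite μZ]
    (F : 𝓐 → ℝ) (pA : 𝓐 → 𝓩 → ℝ) (h : 𝓩 → ℝ)
    (hint : Integrable (fun q : 𝓐 × 𝓩 => F q.1 * pA q.1 q.2 * h q.2) (μA.prod μZ)) :
    ∫ z, (∫ a, F a * pA a z ∂μA) * h z ∂μZ
      = ∫ a, F a * ∫ z, pA a z * h z ∂μZ ∂μA := by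
  have swap := integral_integral_swap (f := fun a z => F a * pA a z * h z) hint
  calc ∫ z, (∫ a, F a * pA a z ∂μA) * h z ∂μZ
      = ∫ z, ∫ a, F a * pA a z * h z ∂μA ∂μZ := by
        refine integral_congr_ae (Filter.Eventually.of_forall fun z => ?_)
        dsimp only
        rw [← integral_mul_const]
    _ = ∫ a, ∫ z, F a * pA a z * h z ∂μZ ∂μA := swap.symm
    _ = ∫ a, F a * ∫ z, pA a z * h z ∂μZ ∂μA := by
        refine integral_congr_ae (Filter.Eventually.of_forall fun a => ?_)
        dsimp only
        simp_rw [mul_assoc, integral_const_mul]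

/-- if two instrument policies h̃₁, h̃₂ induce the same treatment
marginal, ∫ p(a|z,W)h̃₁(z|W)dz = ∫ p(a|z,W)h̃₂(z|W)dz for all (a,W), then — with
E[Y|Z=z,W] = ∫∫ y p(y|a,W) p(a|z,W) dy da (exclusion at the level of the observed
conditional: p(y|a,z,W) = p(y|a,W)) — the identified causal means coincide:
E_W[∫ E[Y|Z=z,W] dH̃₁(z|W)] = E_W[∫ E[Y|Z=z,W] dH̃₂(z|W)]. -/
theorem stmt19 {𝓦 𝓐 𝓩 : Type*} [MeasurableSpace 𝓦] [MeasurableSpace 𝓐]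
    [MeasurableSpace 𝓩]
    (PW : Measure 𝓦) [IsProbabilityMeasure PW]
    (μA : Measure 𝓐) (μZ : Measure 𝓩) (μY : Measure ℝ)
    [SigmaFinite μA] [SigmaFinite μZ]
    (pA : 𝓐 → 𝓩 → 𝓦 → ℝ) (pY : ℝ → 𝓐 → 𝓦 → ℝ)
    (h1 h2 : 𝓩 → 𝓦 → ℝ)
    (hB : ∀ a w, ∫ z, pA a z w * h1 z w ∂μZ = ∫ z, pA a z w * h2 z w ∂μZ)
    (EY : 𝓩 → 𝓦 → ℝ)
    (hEY : ∀ z w, EY z w = ∫ a, (∫ y, y * pY y a w ∂μY) * pA a z w ∂μA)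
    (hint1 : ∀ w, Integrable (fun q : 𝓐 × 𝓩 =>
      (∫ y, y * pY y q.1 w ∂μY) * pA q.1 q.2 w * h1 q.2 w) (μA.prod μZ))
    (hint2 : ∀ w, Integrable (fun q : 𝓐 × 𝓩 =>
      (∫ y, y * pY y q.1 w ∂μY) * pA q.1 q.2 w * h2 q.2 w) (μA.prod μZ)) :
    ∫ w, ∫ z, EY z w * h1 z w ∂μZ ∂PW
      = ∫ w, ∫ z, EY z w * h2 z w ∂μZ ∂PW := by
  refine integral_congr_ae (Filter.Eventually.of_forall fun w => ?_)
  simp_rw [hEY]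
  rw [inner_eq μA μZ _ _ _ (hint1 w), inner_eq μA μZ _ _ _ (hint2 w)]
  exact integral_congr_ae (Filter.Eventually.of_forall fun a => by dsimp only; rw [hB a w])
end
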